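/- Let V: Lip(S^{n-1}) → ℝ be a τ-continuous valuation, let A, B ⊂ S^{n-1} be Borel sets, λ ∈ ℝ and γ ≥ 0. Then lim_{ω → 0⁺} sup{|V(f + λ) − V(λ)| : supp(f) ⊂ A^ω ∪ B^ω, L(f) ≤ γ} = 0. -/

import Mathlib

open MeasureTheory Metric Set Filter Topology Classical
open scoped ENNReal NNReal

noncomputable section

/-- Euclidean space `ℝⁿ`. -/
abbrev Eucl (n : ℕ) := EuclideanSpace ℝ (Fin n)

/-- The unit sphere `S^{n-1} ⊆ ℝⁿ`. -/
abbrev Sph (n : ℕ) : Set (Eucl n) := Metric.sphere (0 : Eucl n) 1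

/-- The `(n-1)`-dimensional Hausdorff measure on the sphere, normalized to total mass 1. -/
noncomputable def sphMeasure (n : ℕ) : Measure (Sph n) :=
  ((μH[(n : ℝ) - 1] : Measure (Sph n)) Set.univ)⁻¹ • (μH[(n : ℝ) - 1] : Measure (Sph n))

/-- The `0`-homogeneous extension of a function on the sphere. -/
noncomputable def homExt {n : ℕ} (f : Sph n → ℝ) (y : Eucl n) : ℝ :=
  if h : y = (0 : Eucl n) then 0 else
    f ⟨‖y‖⁻¹ • y, by
      simp [mem_sphere_zero_iff_norm, norm_smul, norm_inv,
        inv_mul_cancel₀ (norm_ne_zero_iff.mpr h)]⟩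

/-- The spherical gradient of `f : S^{n-1} → ℝ`, realized as the (Euclidean) gradient of
its `0`-homogeneous extension, which is tangential at points of the sphere. -/
noncomputable def sphGrad {n : ℕ} (f : Sph n → ℝ) (y : Eucl n) : Eucl n :=
  gradient (homExt f) y

/-- `f` belongs to `Lip(S^{n-1})`. -/
def IsLip {n : ℕ} (f : Sph n → ℝ) : Prop := ∃ L : ℝ≥0, LipschitzWith L f

/-- `‖f‖ = max (‖f‖_∞, L(f)) ≤ M`. -/
def NormBound {n : ℕ} (M : ℝ) (f : Sph n → ℝ) : Prop :=
  (∀ x, |f x| ≤ M) ∧ LipschitzWith (Real.toNNReal M) f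

/-- τ-convergence of a sequence in `Lip(S^{n-1})`: uniform convergence, a uniform a.e.
bound on the gradients, and a.e. convergence of the gradients. -/
def TauTendsto {n : ℕ} (fk : ℕ → Sph n → ℝ) (f : Sph n → ℝ) : Prop :=
  TendstoUniformly fk f atTop ∧
  (∃ C : ℝ, ∀ k, ∀ᵐ (x : Sph n) ∂(sphMeasure n), ‖sphGrad (fk k) (x : Eucl n)‖ ≤ C) ∧
  (∀ᵐ (x : Sph n) ∂(sphMeasure n),
    Tendsto (fun k => sphGrad (fk k) (x : Eucl n)) atTop (𝓝 (sphGrad f (x : Eucl n))))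

/-- `V` is a valuation on `Lip(S^{n-1})`. -/
def IsValuation {n : ℕ} (V : (Sph n → ℝ) → ℝ) : Prop :=
  ∀ f g : Sph n → ℝ, IsLip f → IsLip g → V (f ⊔ g) + V (f ⊓ g) = V f + V g

/-- τ-continuity of a functional on `Lip(S^{n-1})`. -/
def TauContinuous {n : ℕ} (V : (Sph n → ℝ) → ℝ) : Prop :=
  ∀ (fk : ℕ → Sph n → ℝ) (f : Sph n → ℝ), (∀ k, IsLip (fk k)) → IsLip f →
    TauTendsto fk f → Tendsto (fun k => V (fk k)) atTop (𝓝 (V f))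

/-- The metric `d_τ(f,g) = ‖f - g‖_∞ + ∫ ‖∇f - ∇g‖ dH^{n-1}`. -/
noncomputable def dTau {n : ℕ} (f g : Sph n → ℝ) : ℝ :=
  (⨆ x : Sph n, |f x - g x|) +
    ∫ x : Sph n, ‖sphGrad f (x : Eucl n) - sphGrad g (x : Eucl n)‖ ∂(sphMeasure n)

/-- The action of an orthogonal map `φ ∈ O(n)` on the sphere. -/
noncomputable def rotAct {n : ℕ} (φ : Eucl n ≃ₗᵢ[ℝ] Eucl n) (x : Sph n) : Sph n :=
  ⟨φ (x : Eucl n), by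
    rw [mem_sphere_zero_iff_norm, φ.norm_map, ← mem_sphere_zero_iff_norm]
    exact x.2⟩

/-- Rotation invariance of a functional on `Lip(S^{n-1})`. -/
def RotInv {n : ℕ} (V : (Sph n → ℝ) → ℝ) : Prop :=
  ∀ (φ : Eucl n ≃ₗᵢ[ℝ] Eucl n) (f : Sph n → ℝ), V (f ∘ rotAct φ) = V f

/-- The outer parallel band `A^ω = {t ∈ S^{n-1} : 0 < d(t, A) < ω}`. -/
def band {n : ℕ} (A : Set (Sph n)) (ω : ℝ) : Set (Sph n) :=
  {t : Sph n | 0 < Metric.infDist t A ∧ Metric.infDist t A < ω}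

/-!
As `ω → 0⁺` every point of the sphere eventually leaves `A^ω ∪ B^ω`. If the supremum did not
tend to `0`, we would get `γ`-Lipschitz `f_k` supported in `A^{ω_k} ∪ B^{ω_k}`, `ω_k → 0⁺`, with
`|V(f_k + λ) − V(λ)|` bounded below. Each point then has a neighbourhood on which `f_k`
eventually vanishes, so `f_k + λ → λ` pointwise, hence uniformly (equi-Lipschitz functions on a
compact space); the spherical gradients are bounded by `4γ` and eventually vanish at every point.
Thus `f_k + λ` τ-converges to `λ`, and τ-continuity gives a contradiction.
-/

section Normalization

variable {E : Type*} [NormedAddCommGroup E] [NormedSpace ℝ E]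

lemma norm_inv_norm_smul_sub_inv_norm_smul_le {x y : E} (hx : x ≠ 0) (hy : y ≠ 0) :
    ‖‖x‖⁻¹ • x - ‖y‖⁻¹ • y‖ ≤ 2 * ‖x - y‖ / ‖x‖ := by
  have hx0 : 0 < ‖x‖ := norm_pos_iff.mpr hx
  have hy0 : 0 < ‖y‖ := norm_pos_iff.mpr hy
  have hsplit : ‖x‖⁻¹ • x - ‖y‖⁻¹ • y = ‖x‖⁻¹ • (x - y) + (‖x‖⁻¹ - ‖y‖⁻¹) • y := by
    rw [smul_sub, sub_smul]; abel
  have hsecond : ‖(‖x‖⁻¹ - ‖y‖⁻¹) • y‖ = |‖y‖ - ‖x‖| / ‖x‖ := by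
    rw [norm_smul, Real.norm_eq_abs, inv_sub_inv hx0.ne' hy0.ne', abs_div,
      abs_of_pos (mul_pos hx0 hy0)]
    field_simp
  calc ‖‖x‖⁻¹ • x - ‖y‖⁻¹ • y‖
      ≤ ‖‖x‖⁻¹ • (x - y)‖ + ‖(‖x‖⁻¹ - ‖y‖⁻¹) • y‖ := hsplit ▸ norm_add_le _ _
    _ = ‖x - y‖ / ‖x‖ + |‖y‖ - ‖x‖| / ‖x‖ := by
      rw [hsecond, norm_smul, norm_inv, norm_norm, inv_mul_eq_div]
    _ ≤ ‖x - y‖ / ‖x‖ + ‖x - y‖ / ‖x‖ := by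
      gcongr
      rw [norm_sub_rev]
      exact abs_norm_sub_norm_le y x
    _ = 2 * ‖x - y‖ / ‖x‖ := by ring

end Normalization

section Sphere

variable {n : ℕ}

instance : CompactSpace (Sph n) := isCompact_iff_compactSpace.mp (isCompact_sphere 0 1)

lemma inv_norm_smul_mem_sph {y : Eucl n} (hy : y ≠ 0) : ‖y‖⁻¹ • y ∈ Sph n := by
  simp [norm_smul, inv_mul_cancel₀ (norm_ne_zero_iff.mpr hy)]

lemma homExt_of_ne_zero (f : Sph n → ℝ) {y : Eucl n} (hy : y ≠ 0) :
    homExt f y = f ⟨‖y‖⁻¹ • y, inv_norm_smul_mem_sph hy⟩ :=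
  dif_neg hy

lemma homExt_lipschitzOnWith {f : Sph n → ℝ} {K : ℝ≥0} (hf : LipschitzWith K f) :
    LipschitzOnWith (4 * K) (homExt f) {y : Eucl n | 1 / 2 ≤ ‖y‖} := by
  refine LipschitzOnWith.of_dist_le_mul fun x hx y hy => ?_
  have hx' : (1 / 2 : ℝ) ≤ ‖x‖ := hx
  have hx0 : x ≠ 0 := norm_pos_iff.mp (by linarith)
  have hy0 : y ≠ 0 := norm_pos_iff.mp (by linarith [show (1 / 2 : ℝ) ≤ ‖y‖ from hy])
  rw [homExt_of_ne_zero f hx0, homExt_of_ne_zero f hy0]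
  calc dist (f _) (f _) ≤ K * ‖‖x‖⁻¹ • x - ‖y‖⁻¹ • y‖ := by
        simpa only [Subtype.dist_eq, dist_eq_norm] using hf.dist_le_mul _ _
    _ ≤ K * (2 * ‖x - y‖ / ‖x‖) := by
        gcongr; exact norm_inv_norm_smul_sub_inv_norm_smul_le hx0 hy0
    _ ≤ K * (4 * ‖x - y‖) := by
        gcongr
        rw [div_le_iff₀ (norm_pos_iff.mpr hx0)]
        nlinarith [norm_nonneg (x - y)]
    _ = ↑(4 * K) * dist x y := by rw [dist_eq_norm]; push_cast; ring

lemma norm_sphGrad_le {f : Sph n → ℝ} {K : ℝ≥0} (hf : LipschitzWith K f) (x : Sph n) :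
    ‖sphGrad f x‖ ≤ 4 * K := by
  have hnhds : {y : Eucl n | 1 / 2 ≤ ‖y‖} ∈ 𝓝 (x : Eucl n) := by
    refine mem_of_superset ((isOpen_lt continuous_const continuous_norm).mem_nhds ?_)
      fun y (hy : 1 / 2 < ‖y‖) => hy.le
    show (1 / 2 : ℝ) < ‖(x : Eucl n)‖
    rw [norm_eq_of_mem_sphere x]; norm_num
  calc ‖sphGrad f x‖ = ‖fderiv ℝ (homExt f) x‖ := (InnerProductSpace.toDual ℝ _).symm.norm_map _
    _ ≤ ↑(4 * K) := norm_fderiv_le_of_lipschitzOn ℝ hnhds (homExt_lipschitzOnWith hf)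
    _ = 4 * K := by push_cast; ring

lemma Filter.EventuallyEq.homExt {f g : Sph n → ℝ} {x : Sph n} (h : f =ᶠ[𝓝 x] g) :
    homExt f =ᶠ[𝓝 (x : Eucl n)] homExt g := by
  rw [nhds_subtype, EventuallyEq, eventually_comap] at h
  have hx0 : (x : Eucl n) ≠ 0 := ne_zero_of_mem_unit_sphere x
  have hnormalize : Tendsto (fun y : Eucl n => ‖y‖⁻¹ • y) (𝓝 x) (𝓝 x) := by
    have := ((continuous_norm.tendsto (x : Eucl n)).inv₀ (norm_ne_zero_iff.mpr hx0)).smul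
      tendsto_id
    rwa [norm_eq_of_mem_sphere x, inv_one, one_smul] at this
  filter_upwards [hnormalize h, eventually_ne_nhds hx0] with y hy hy0
  rw [homExt_of_ne_zero f hy0, homExt_of_ne_zero g hy0]
  exact hy _ rfl

lemma Filter.EventuallyEq.sphGrad_eq {f g : Sph n → ℝ} {x : Sph n} (h : f =ᶠ[𝓝 x] g) :
    sphGrad f x = sphGrad g x :=
  h.homExt.gradient_eq

lemma tauTendsto_of_eventually_eventuallyEq {F : ℕ → Sph n → ℝ} {f : Sph n → ℝ} {K : ℝ≥0}
    (hF : ∀ k, LipschitzWith K (F k)) (h : ∀ x, ∀ᶠ k in atTop, F k =ᶠ[𝓝 x] f) :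
    TauTendsto F f := by
  have hpointwise : Tendsto F atTop (𝓝 f) := tendsto_pi_nhds.mpr fun x =>
    tendsto_const_nhds.congr' <| (h x).mono fun k hk => hk.eq_of_nhds.symm
  refine ⟨?_, ⟨4 * K, fun k => ae_of_all _ (norm_sphGrad_le (hF k))⟩, ae_of_all _ fun x => ?_⟩
  · exact UniformFun.tendsto_iff_tendstoUniformly.mp <|
      ((LipschitzWith.uniformEquicontinuous F K hF).equicontinuous.tendsto_uniformFun_iff_pi
      atTop f).mpr hpointwise
  · exact tendsto_const_nhds.congr' <| (h x).mono fun k hk => hk.sphGrad_eq.symm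

lemma eventually_notMem_band (A : Set (Sph n)) (x : Sph n) :
    ∀ᶠ ω in 𝓝[>] (0 : ℝ), x ∉ band A ω := by
  rcases (infDist_nonneg : 0 ≤ infDist x A).eq_or_lt with hx | hx
  · exact Eventually.of_forall fun ω hω => hω.1.ne' hx.symm
  · filter_upwards [Ioo_mem_nhdsGT hx] with ω hω hxω
    exact hω.2.not_gt hxω.2

lemma TauContinuous.eventually_abs_sub_le {V : (Sph n → ℝ) → ℝ} (hτ : TauContinuous V)
    (A B : Set (Sph n)) (lam : ℝ) (γ : ℝ≥0) {ε : ℝ} (hε : 0 < ε) :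
    ∀ᶠ ω in 𝓝[>] (0 : ℝ), ∀ f : Sph n → ℝ, tsupport f ⊆ band A ω ∪ band B ω →
      LipschitzWith γ f → |V (f + fun _ => lam) - V fun _ => lam| ≤ ε := by
  by_contra hfreq
  obtain ⟨ω, hω, hbad⟩ := exists_seq_forall_of_frequently (not_eventually.mp hfreq)
  push Not at hbad
  choose F hsupp hlip hlarge using hbad
  have hvanish : ∀ x, ∀ᶠ k in atTop, (F k + fun _ => lam) =ᶠ[𝓝 x] fun _ => lam := by
    intro x
    filter_upwards [hω.eventually ((eventually_notMem_band A x).and (eventually_notMem_band B x))]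
      with k hk
    have hx : x ∉ tsupport (F k) := fun hx => (hsupp k hx).elim hk.1 hk.2
    filter_upwards [notMem_tsupport_iff_eventuallyEq.mp hx] with y hy
    simp [hy]
  have hlim := hτ _ _ (fun k => ⟨γ + 0, (hlip k).add (LipschitzWith.const lam)⟩)
    ⟨0, LipschitzWith.const lam⟩
    (tauTendsto_of_eventually_eventuallyEq (fun k => (hlip k).add (LipschitzWith.const lam))
      hvanish)
  obtain ⟨k, hk⟩ := ((tendsto_iff_dist_tendsto_zero.mp hlim).eventually (gt_mem_nhds hε)).exists
  exact (hlarge k).not_ge (Real.dist_eq _ _ ▸ hk.le)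

end Sphere

theorem sup_over_outer_bands_tendsto_zero_general {n : ℕ} (V : (Sph n → ℝ) → ℝ)
    (hτ : TauContinuous V)
    (A B : Set (Sph n))
    (lam : ℝ) (γ : ℝ≥0) :
    Tendsto (fun ω : ℝ =>
        ⨆ f : {f : Sph n → ℝ // tsupport f ⊆ band A ω ∪ band B ω ∧ LipschitzWith γ f},
          |V ((f : Sph n → ℝ) + fun _ => lam) - V (fun _ => lam)|)
      (𝓝[>] 0) (𝓝 0) := by
  rw [Metric.tendsto_nhds]
  intro ε hε
  filter_upwards [hτ.eventually_abs_sub_le A B lam γ (half_pos hε)] with ω hω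
  have hsup : (⨆ f : {f : Sph n → ℝ // tsupport f ⊆ band A ω ∪ band B ω ∧ LipschitzWith γ f},
      |V ((f : Sph n → ℝ) + fun _ => lam) - V (fun _ => lam)|) ≤ ε / 2 :=
    Real.iSup_le (fun f => hω f f.2.1 f.2.2) (half_pos hε).le
  rw [Real.dist_0_eq_abs, abs_of_nonneg (Real.iSup_nonneg fun _ => abs_nonneg _)]
  linarith

/-- for a τ-continuous valuation `V`, Borel sets `A, B ⊆ S^{n-1}`, `λ ∈ ℝ`
and `γ ≥ 0`, `sup {|V(f+λ) − V(λ)| : supp f ⊆ A^ω ∪ B^ω, L(f) ≤ γ} → 0` as `ω → 0⁺`. -/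
theorem sup_over_outer_bands_tendsto_zero {n : ℕ} (hn : 1 ≤ n) (V : (Sph n → ℝ) → ℝ)
    (hval : IsValuation V) (hτ : TauContinuous V)
    (A B : Set (Sph n)) (hA : MeasurableSet A) (hB : MeasurableSet B)
    (lam : ℝ) (γ : ℝ≥0) :
    Tendsto (fun ω : ℝ =>
        ⨆ f : {f : Sph n → ℝ // tsupport f ⊆ band A ω ∪ band B ω ∧ LipschitzWith γ f},
          |V ((f : Sph n → ℝ) + fun _ => lam) - V (fun _ => lam)|)
      (𝓝[>] 0) (𝓝 0) :=
  sup_over_outer_bands_tendsto_zero_general V hτ A B lam γ
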